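/- Let λ be a martingale solution on C([0,T],ℝ^d) for a time-dependent operator L_t with Borel coefficients, let 0 < s < T, and let ρ : C([0,T],ℝ^d) → [0,∞) be a bounded probability density with respect to λ that is F_s-measurable. Then the pushforward of ρλ under restriction to [s,T] is a martingale solution on C([s,T],ℝ^d) for the same operator on the time interval [s,T]. -/

import Mathlib

open MeasureTheory Set
open scoped ENNReal RealInnerProductSpace

noncomputable section

abbrev Ed (d : ℕ) := EuclideanSpace ℝ (Fin d)

/-- `C([s,T],ℝ^d)` with the sup topology. -/
abbrev PathI (s T : ℝ) (d : ℕ) := C(Set.Icc s T, Ed d)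

instance (s T : ℝ) (d : ℕ) : MeasurableSpace (PathI s T d) := borel _

/-- Natural filtration on `C([s,T],ℝ^d)`: `σ(e_r : r ≤ t)`. -/
def natFiltI (s T : ℝ) (d : ℕ) (t : ℝ) : MeasurableSpace (PathI s T d) :=
  ⨆ u : {u : Set.Icc s T // (u : ℝ) ≤ t},
    MeasurableSpace.comap (fun γ : PathI s T d => γ u.1) (borel (Ed d))

/-- Martingale condition (in the tested sense) on the interval `[s,T]`. -/
def MartCondI {s T : ℝ} {d : ℕ} (lam : Measure (PathI s T d))
    (X : ℝ → PathI s T d → ℝ) : Prop :=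
  ∀ u t : ℝ, s ≤ u → u ≤ t → t ≤ T →
    ∀ H : PathI s T d → ℝ, Measurable[natFiltI s T d u] H →
      (∀ γ, H γ ∈ Set.Icc (0:ℝ) 1) →
      ∫ γ, H γ * (X t γ - X u γ) ∂lam = 0

/-- The time-dependent operator `L_t φ(x) = b_t(x)·∇φ(x) + (1/2)a_t(x):∇²φ(x)`. -/
def LopI {d : ℕ} (b : ℝ → Ed d → Ed d) (a : ℝ → Ed d → (Ed d →L[ℝ] Ed d))
    (t : ℝ) (φ : Ed d → ℝ) (x : Ed d) : ℝ :=
  ⟪b t x, gradient φ x⟫ +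
    (1/2) * LinearMap.trace ℝ (Ed d) ((a t x ∘L fderiv ℝ (gradient φ) x).toLinearMap)

/-- The process `X_t^{ξφ}` on `[s,T]`. -/
def XprocI {d : ℕ} (s T : ℝ) (h : s ≤ T) (b : ℝ → Ed d → Ed d)
    (a : ℝ → Ed d → (Ed d →L[ℝ] Ed d)) (ξ : ℝ → ℝ) (φ : Ed d → ℝ)
    (t : ℝ) (γ : PathI s T d) : ℝ :=
  ξ t * φ (γ (Set.projIcc s T h t)) -
    ∫ r in s..t,
      (deriv ξ r * φ (γ (Set.projIcc s T h r)) +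
        ξ r * LopI b a r φ (γ (Set.projIcc s T h r)))

/-- `λ` is a martingale solution on `[s,T]` for the operator with coefficients `b, a`. -/
def IsMartSolI {d : ℕ} (s T : ℝ) (h : s ≤ T) (b : ℝ → Ed d → Ed d)
    (a : ℝ → Ed d → (Ed d →L[ℝ] Ed d)) (lam : Measure (PathI s T d)) : Prop :=
  IsProbabilityMeasure lam ∧
  (∀ R > (0:ℝ),
    (∫⁻ γ, ∫⁻ t in Set.Icc s T,
        ENNReal.ofReal ((‖b t (γ (Set.projIcc s T h t))‖ +
            ‖a t (γ (Set.projIcc s T h t))‖) *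
          Set.indicator (Metric.ball (0 : Ed d) R) (fun _ => (1:ℝ))
            (γ (Set.projIcc s T h t))) ∂volume ∂lam) < ∞) ∧
  ∀ ξ φ : _, (ContDiff ℝ 1 ξ ∧ HasCompactSupport ξ ∧ Function.support ξ ⊆ Set.Ioo s T) →
    (ContDiff ℝ 2 φ ∧ HasCompactSupport φ) →
    MartCondI lam (XprocI s T h b a ξ φ)

/-- The restriction map `C([0,T],ℝ^d) → C([s,T],ℝ^d)`. -/
def restrI {d : ℕ} {s T : ℝ} (hs : 0 ≤ s) (γ : PathI 0 T d) : PathI s T d :=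
  γ.comp ⟨Set.inclusion (Set.Icc_subset_Icc hs le_rfl),
    continuous_inclusion (Set.Icc_subset_Icc hs le_rfl)⟩

instance (s T : ℝ) (d : ℕ) : BorelSpace (PathI s T d) := ⟨rfl⟩

lemma natFiltI_le (s T : ℝ) (d : ℕ) (t : ℝ) :
    natFiltI s T d t ≤ (inferInstance : MeasurableSpace (PathI s T d)) := by
  refine iSup_le fun u => ?_
  have h : Measurable (fun γ : PathI s T d => γ u.1) :=
    (ContinuousEvalConst.continuous_eval_const u.1).measurable
  rw [show borel (Ed d) = (inferInstance : MeasurableSpace (Ed d)) from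
    (BorelSpace.measurable_eq).symm]
  exact measurable_iff_comap_le.mp h

lemma natFiltI_mono (s T : ℝ) (d : ℕ) {t t' : ℝ} (h : t ≤ t') :
    natFiltI s T d t ≤ natFiltI s T d t' := by
  refine iSup_le fun u => ?_
  exact le_iSup (fun u : {u : Set.Icc s T // (u : ℝ) ≤ t'} =>
    MeasurableSpace.comap (fun γ : PathI s T d => γ u.1) (borel (Ed d)))
    ⟨u.1, u.2.trans h⟩

lemma continuous_restrI {d : ℕ} {s T : ℝ} (hs : 0 ≤ s) :
    Continuous (restrI (d := d) (T := T) hs) :=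
  ContinuousMap.continuous_precomp _

lemma restrI_comap {d : ℕ} {s T : ℝ} (hs : 0 ≤ s) (u : ℝ) :
    MeasurableSpace.comap (restrI (d := d) (T := T) hs) (natFiltI s T d u)
      ≤ natFiltI 0 T d u := by
  rw [natFiltI, MeasurableSpace.comap_iSup]
  refine iSup_le fun v => ?_
  rw [MeasurableSpace.comap_comp]
  exact le_iSup (fun w : {w : Set.Icc (0:ℝ) T // (w : ℝ) ≤ u} =>
    MeasurableSpace.comap (fun γ : PathI 0 T d => γ w.1) (borel (Ed d)))
    ⟨Set.inclusion (Set.Icc_subset_Icc hs le_rfl) v.1, v.2⟩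

lemma continuous_evalProj {d : ℕ} {s T : ℝ} (h : s ≤ T) :
    Continuous fun p : PathI s T d × ℝ => p.1 (Set.projIcc s T h p.2) := by
  have hp : Continuous (Set.projIcc s T h) := continuous_projIcc
  exact continuous_eval.comp (continuous_fst.prodMk (hp.comp continuous_snd))

lemma continuous_gradient' {d : ℕ} {φ : Ed d → ℝ} (hφ : ContDiff ℝ 2 φ) :
    ContDiff ℝ 1 (gradient φ) := by
  have : gradient φ = fun x => (InnerProductSpace.toDual ℝ (Ed d)).symm (fderiv ℝ φ x) := rfl
  rw [this]
  exact ((InnerProductSpace.toDual ℝ (Ed d)).symm.contDiff).comp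
    (hφ.fderiv_right (by norm_num))

lemma measurable_LopI {d : ℕ} {b : ℝ → Ed d → Ed d} {a : ℝ → Ed d → (Ed d →L[ℝ] Ed d)}
    (hb : Measurable fun p : ℝ × Ed d => b p.1 p.2)
    (ha : Measurable fun p : ℝ × Ed d => a p.1 p.2)
    {φ : Ed d → ℝ} (hφ : ContDiff ℝ 2 φ) :
    Measurable fun p : ℝ × Ed d => LopI b a p.1 φ p.2 := by
  have hg : Continuous (gradient φ) := (continuous_gradient' hφ).continuous
  have hHess : Continuous (fderiv ℝ (gradient φ)) :=
    (continuous_gradient' hφ).continuous_fderiv one_ne_zero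
  have h1 : Measurable fun p : ℝ × Ed d => ⟪b p.1 p.2, gradient φ p.2⟫ :=
    hb.inner ((hg.comp continuous_snd).measurable)
  have htr : Continuous fun M : Ed d →L[ℝ] Ed d =>
      LinearMap.trace ℝ (Ed d) M.toLinearMap := by
    exact LinearMap.continuous_of_finiteDimensional
      ((LinearMap.trace ℝ (Ed d)).comp (ContinuousLinearMap.coeLM ℝ))
  have hcomp : Continuous fun q : (Ed d →L[ℝ] Ed d) × (Ed d →L[ℝ] Ed d) =>
      q.1 ∘L q.2 := isBoundedBilinearMap_comp.continuous
  have h2 : Measurable fun p : ℝ × Ed d =>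
      LinearMap.trace ℝ (Ed d) ((a p.1 p.2 ∘L fderiv ℝ (gradient φ) p.2).toLinearMap) := by
    exact (htr.comp hcomp).measurable.comp
      (ha.prodMk ((hHess.comp continuous_snd).measurable))
  exact h1.add (measurable_const.mul h2)

lemma measurable_integrand {d : ℕ} {s T : ℝ} (h : s ≤ T) {b : ℝ → Ed d → Ed d}
    {a : ℝ → Ed d → (Ed d →L[ℝ] Ed d)}
    (hb : Measurable fun p : ℝ × Ed d => b p.1 p.2)
    (ha : Measurable fun p : ℝ × Ed d => a p.1 p.2)
    {ξ : ℝ → ℝ} (hξ : ContDiff ℝ 1 ξ) {φ : Ed d → ℝ} (hφ : ContDiff ℝ 2 φ) :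
    Measurable fun p : PathI s T d × ℝ =>
      deriv ξ p.2 * φ (p.1 (Set.projIcc s T h p.2)) +
        ξ p.2 * LopI b a p.2 φ (p.1 (Set.projIcc s T h p.2)) := by
  have hev : Measurable fun p : PathI s T d × ℝ => p.1 (Set.projIcc s T h p.2) :=
    (continuous_evalProj h).measurable
  have hm : Measurable fun p : PathI s T d × ℝ =>
      (p.2, p.1 (Set.projIcc s T h p.2)) := measurable_snd.prodMk hev
  have hL : Measurable fun p : PathI s T d × ℝ =>
      LopI b a p.2 φ (p.1 (Set.projIcc s T h p.2)) :=
    (measurable_LopI hb ha hφ).comp (f := fun p : PathI s T d × ℝ => (p.2, p.1 (Set.projIcc s T h p.2))) hm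
  have hφev : Measurable fun p : PathI s T d × ℝ => φ (p.1 (Set.projIcc s T h p.2)) :=
    hφ.continuous.measurable.comp hev
  exact ((((hξ.continuous_deriv le_rfl).measurable.comp measurable_snd).mul hφev).add
    ((hξ.continuous.measurable.comp measurable_snd).mul hL))

lemma measurable_XprocI {d : ℕ} {s T : ℝ} (h : s ≤ T) {b : ℝ → Ed d → Ed d}
    {a : ℝ → Ed d → (Ed d →L[ℝ] Ed d)}
    (hb : Measurable fun p : ℝ × Ed d => b p.1 p.2)
    (ha : Measurable fun p : ℝ × Ed d => a p.1 p.2)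
    {ξ : ℝ → ℝ} (hξ : ContDiff ℝ 1 ξ) {φ : Ed d → ℝ} (hφ : ContDiff ℝ 2 φ)
    {t : ℝ} (hst : s ≤ t) :
    Measurable (XprocI s T h b a ξ φ t) := by
  have h1 : Measurable fun γ : PathI s T d => ξ t * φ (γ (Set.projIcc s T h t)) :=
    measurable_const.mul (hφ.continuous.measurable.comp
      ((ContinuousEvalConst.continuous_eval_const _).measurable))
  have h2 : Measurable fun γ : PathI s T d =>
      ∫ r in Set.Ioc s t,
        (deriv ξ r * φ (γ (Set.projIcc s T h r)) +
          ξ r * LopI b a r φ (γ (Set.projIcc s T h r))) := by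
    exact (StronglyMeasurable.integral_prod_right'
      (ν := volume.restrict (Set.Ioc s t))
      ((measurable_integrand h hb ha hξ hφ).stronglyMeasurable)).measurable
  have : XprocI s T h b a ξ φ t = fun γ =>
      ξ t * φ (γ (Set.projIcc s T h t)) -
        ∫ r in Set.Ioc s t,
          (deriv ξ r * φ (γ (Set.projIcc s T h r)) +
            ξ r * LopI b a r φ (γ (Set.projIcc s T h r))) := by
    funext γ
    rw [XprocI, intervalIntegral.integral_of_le hst]
  rw [this]
  exact h1.sub h2

lemma deriv_xi_eq_zero {s T : ℝ} {ξ : ℝ → ℝ} (hsupp : Function.support ξ ⊆ Set.Ioo s T)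
    {r : ℝ} (hr : r < s) : deriv ξ r = 0 := by
  have hev : ξ =ᶠ[nhds r] fun _ => (0:ℝ) := by
    filter_upwards [Iio_mem_nhds hr] with x hx
    by_contra hne
    exact absurd ((hsupp hne).1) (not_lt.mpr (le_of_lt hx))
  rw [hev.deriv_eq, deriv_const]

lemma xi_eq_zero {s T : ℝ} {ξ : ℝ → ℝ} (hsupp : Function.support ξ ⊆ Set.Ioo s T)
    {r : ℝ} (hr : r ≤ s) : ξ r = 0 := by
  by_contra hne
  exact absurd ((hsupp hne).1) (not_lt.mpr hr)

lemma Xproc_restr_eq {d : ℕ} {s T : ℝ} (hs : 0 < s) (hsT : s < T)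
    (b : ℝ → Ed d → Ed d) (a : ℝ → Ed d → (Ed d →L[ℝ] Ed d))
    {ξ : ℝ → ℝ} (hsupp : Function.support ξ ⊆ Set.Ioo s T) (φ : Ed d → ℝ)
    {t : ℝ} (hst : s ≤ t) (htT : t ≤ T) (γ : PathI 0 T d) :
    XprocI s T (le_of_lt hsT) b a ξ φ t (restrI (le_of_lt hs) γ)
      = XprocI 0 T (le_of_lt (lt_trans hs hsT)) b a ξ φ t γ := by
  have h0T : (0:ℝ) ≤ T := le_of_lt (lt_trans hs hsT)
  have heval : ∀ r : ℝ, s ≤ r → r ≤ T →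
      (restrI (le_of_lt hs) γ) (Set.projIcc s T (le_of_lt hsT) r)
        = γ (Set.projIcc 0 T h0T r) := by
    intro r h1 h2
    rw [Set.projIcc_of_mem _ ⟨h1, h2⟩, Set.projIcc_of_mem _ ⟨(le_of_lt hs).trans h1, h2⟩]
    rfl
  rw [XprocI, XprocI, heval t hst htT]
  congr 1
  -- integrals
  set g : ℝ → ℝ := fun r =>
    deriv ξ r * φ (γ (Set.projIcc 0 T h0T r)) +
      ξ r * LopI b a r φ (γ (Set.projIcc 0 T h0T r)) with hg
  have h0t : (0:ℝ) ≤ t := (le_of_lt hs).trans hst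
  rw [intervalIntegral.integral_of_le hst, intervalIntegral.integral_of_le h0t]
  have hleft : ∫ r in Set.Ioc s t,
      (deriv ξ r * φ ((restrI (le_of_lt hs) γ) (Set.projIcc s T (le_of_lt hsT) r)) +
        ξ r * LopI b a r φ ((restrI (le_of_lt hs) γ) (Set.projIcc s T (le_of_lt hsT) r)))
      = ∫ r in Set.Ioc s t, g r := by
    refine setIntegral_congr_fun measurableSet_Ioc fun r hr => ?_
    rw [heval r (le_of_lt hr.1) (hr.2.trans htT)]
  rw [hleft]
  have hae : (fun r => g r)
      =ᵐ[volume.restrict (Set.Ioc 0 t)] Set.indicator (Set.Ioc s t) g := by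
    have hns : ∀ᵐ r ∂(volume.restrict (Set.Ioc 0 t)), r ≠ s := by
      refine ae_restrict_of_ae ?_
      rw [ae_iff]
      have : {r : ℝ | ¬ r ≠ s} = {s} := by ext r; simp
      rw [this, Real.volume_singleton]
    filter_upwards [hns, ae_restrict_mem measurableSet_Ioc] with r hrs hr
    rcases lt_or_gt_of_ne hrs with hlt | hgt
    · have hg0 : g r = 0 := by
        rw [hg]
        simp only [deriv_xi_eq_zero hsupp hlt, xi_eq_zero hsupp (le_of_lt hlt),
          zero_mul, add_zero]
      rw [hg0,
        Set.indicator_of_notMem (fun hmem => absurd hmem.1 (not_lt.mpr (le_of_lt hlt))) g]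
    · rw [Set.indicator_of_mem (Set.mem_Ioc.mpr ⟨hgt, hr.2⟩) g]
  rw [integral_congr_ae hae, setIntegral_indicator measurableSet_Ioc,
    Set.inter_eq_self_of_subset_right (Set.Ioc_subset_Ioc_left (le_of_lt hs))]

lemma restrI_projIcc {d : ℕ} {s T : ℝ} (hs : 0 < s) (hsT : s < T)
    (γ : PathI 0 T d) {r : ℝ} (h1 : s ≤ r) (h2 : r ≤ T) :
    (restrI (le_of_lt hs) γ) (Set.projIcc s T (le_of_lt hsT) r)
      = γ (Set.projIcc 0 T (le_of_lt (lt_trans hs hsT)) r) := by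
  rw [Set.projIcc_of_mem _ ⟨h1, h2⟩, Set.projIcc_of_mem _ ⟨(le_of_lt hs).trans h1, h2⟩]
  rfl

theorem mart_aux {d : ℕ} {s T : ℝ} (hs : 0 < s) (hsT : s < T)
    (b : ℝ → Ed d → Ed d) (a : ℝ → Ed d → (Ed d →L[ℝ] Ed d))
    (hb : Measurable fun p : ℝ × Ed d => b p.1 p.2)
    (ha : Measurable fun p : ℝ × Ed d => a p.1 p.2)
    (lam : Measure (PathI 0 T d))
    (hprob : IsProbabilityMeasure lam)
    (hmartlam : ∀ ξ φ : _, (ContDiff ℝ 1 ξ ∧ HasCompactSupport ξ ∧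
        Function.support ξ ⊆ Set.Ioo 0 T) →
      (ContDiff ℝ 2 φ ∧ HasCompactSupport φ) →
      ∀ u t : ℝ, 0 ≤ u → u ≤ t → t ≤ T →
        ∀ H : PathI 0 T d → ℝ, Measurable[natFiltI 0 T d u] H →
          (∀ γ, H γ ∈ Set.Icc (0:ℝ) 1) →
          ∫ γ, H γ * (XprocI 0 T (le_of_lt (lt_trans hs hsT)) b a ξ φ t γ -
            XprocI 0 T (le_of_lt (lt_trans hs hsT)) b a ξ φ u γ) ∂lam = 0)
    (ρ : PathI 0 T d → ℝ) (hρmeas : Measurable[natFiltI 0 T d s] ρ)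
    (hρ0 : ∀ γ, 0 ≤ ρ γ) (C : ℝ) (hC : ∀ γ, ρ γ ≤ C)
    (hρ1 : ∫ γ, ρ γ ∂lam = 1)
    (ξ : ℝ → ℝ) (φ : Ed d → ℝ)
    (hξ : ContDiff ℝ 1 ξ ∧ HasCompactSupport ξ ∧ Function.support ξ ⊆ Set.Ioo s T)
    (hφ : ContDiff ℝ 2 φ ∧ HasCompactSupport φ)
    (u t : ℝ) (hsu : s ≤ u) (hut : u ≤ t) (htT : t ≤ T)
    (H : PathI s T d → ℝ) (hHmeas : Measurable[natFiltI s T d u] H)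
    (hH01 : ∀ γ, H γ ∈ Set.Icc (0:ℝ) 1) :
    ∫ γ, H γ * (XprocI s T (le_of_lt hsT) b a ξ φ t γ -
        XprocI s T (le_of_lt hsT) b a ξ φ u γ)
      ∂((lam.withDensity (fun γ => ENNReal.ofReal (ρ γ))).map
        (restrI (le_of_lt hs))) = 0 := by
  have h0T : (0:ℝ) ≤ T := le_of_lt (lt_trans hs hsT)
  have hρm : Measurable ρ := hρmeas.mono (natFiltI_le 0 T d s) le_rfl
  have hrm : Measurable (restrI (d := d) (T := T) (le_of_lt hs)) :=
    (ContinuousMap.continuous_precomp _).measurable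
  have hst : s ≤ t := hsu.trans hut
  have hHb : Measurable H := hHmeas.mono (natFiltI_le s T d u) le_rfl
  -- strong measurability of the integrand downstairs
  have hXt : Measurable (XprocI s T (le_of_lt hsT) b a ξ φ t) :=
    measurable_XprocI (le_of_lt hsT) hb ha hξ.1 hφ.1 hst
  have hXu : Measurable (XprocI s T (le_of_lt hsT) b a ξ φ u) :=
    measurable_XprocI (le_of_lt hsT) hb ha hξ.1 hφ.1 hsu
  have hG : Measurable fun γ' => H γ' * (XprocI s T (le_of_lt hsT) b a ξ φ t γ' -
      XprocI s T (le_of_lt hsT) b a ξ φ u γ') := hHb.mul (hXt.sub hXu)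
  rw [integral_map hrm.aemeasurable hG.aestronglyMeasurable]
  have hρn : Measurable fun γ => (ρ γ).toNNReal := hρm.real_toNNReal
  have hwd : lam.withDensity (fun γ => ENNReal.ofReal (ρ γ))
      = lam.withDensity (fun γ => ((ρ γ).toNNReal : ℝ≥0∞)) := rfl
  rw [hwd, integral_withDensity_eq_integral_smul hρn]
  -- positivity of C
  have hρint : Integrable ρ lam := by
    refine Integrable.mono' (integrable_const C) hρm.aestronglyMeasurable ?_
    exact ae_of_all _ fun γ => by rw [Real.norm_of_nonneg (hρ0 γ)]; exact hC γ
  have hC1 : (1:ℝ) ≤ C := by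
    have h1 := integral_mono hρint (integrable_const C) hC
    rwa [hρ1, integral_const, probReal_univ, one_smul] at h1
  have hCpos : (0:ℝ) < C := lt_of_lt_of_le one_pos hC1
  -- the test function upstairs
  set H' : PathI 0 T d → ℝ := fun γ => H (restrI (le_of_lt hs) γ) * ρ γ / C with hH'def
  have hrmf : Measurable[natFiltI 0 T d u, natFiltI s T d u]
      (restrI (d := d) (T := T) (le_of_lt hs)) :=
    measurable_iff_comap_le.mpr (restrI_comap (le_of_lt hs) u)
  have hH'meas : Measurable[natFiltI 0 T d u] H' := by
    exact ((hHmeas.comp hrmf).mul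
      (hρmeas.mono (natFiltI_mono 0 T d hsu) le_rfl)).div_const C
  have hH'01 : ∀ γ, H' γ ∈ Set.Icc (0:ℝ) 1 := by
    intro γ
    constructor
    · exact div_nonneg (mul_nonneg (hH01 _).1 (hρ0 γ)) (le_of_lt hCpos)
    · rw [div_le_one hCpos]
      calc H (restrI (le_of_lt hs) γ) * ρ γ ≤ 1 * C :=
            mul_le_mul (hH01 _).2 (hC γ) (hρ0 γ) zero_le_one
        _ = C := one_mul C
  have hmart := hmartlam ξ φ ⟨hξ.1, hξ.2.1,
    hξ.2.2.trans (Set.Ioo_subset_Ioo (le_of_lt hs) le_rfl)⟩ hφ u t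
    ((le_of_lt hs).trans hsu) hut htT H' hH'meas hH'01
  -- pointwise identification
  have hpt : ∀ γ, (ρ γ).toNNReal •
      (H (restrI (le_of_lt hs) γ) *
        (XprocI s T (le_of_lt hsT) b a ξ φ t (restrI (le_of_lt hs) γ) -
          XprocI s T (le_of_lt hsT) b a ξ φ u (restrI (le_of_lt hs) γ)))
      = C * (H' γ * (XprocI 0 T h0T b a ξ φ t γ - XprocI 0 T h0T b a ξ φ u γ)) := by
    intro γ
    rw [Xproc_restr_eq hs hsT b a hξ.2.2 φ hst htT γ,
      Xproc_restr_eq hs hsT b a hξ.2.2 φ hsu (hut.trans htT) γ]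
    rw [NNReal.smul_def, smul_eq_mul, Real.coe_toNNReal _ (hρ0 γ), hH'def]
    field_simp
  calc ∫ γ, (ρ γ).toNNReal •
        (H (restrI (le_of_lt hs) γ) *
          (XprocI s T (le_of_lt hsT) b a ξ φ t (restrI (le_of_lt hs) γ) -
            XprocI s T (le_of_lt hsT) b a ξ φ u (restrI (le_of_lt hs) γ))) ∂lam
      = ∫ γ, C * (H' γ * (XprocI 0 T h0T b a ξ φ t γ - XprocI 0 T h0T b a ξ φ u γ)) ∂lam :=
        integral_congr_ae (ae_of_all _ hpt)
    _ = C * ∫ γ, H' γ * (XprocI 0 T h0T b a ξ φ t γ - XprocI 0 T h0T b a ξ φ u γ) ∂lam :=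
        integral_const_mul _ _
    _ = 0 := by rw [hmart, mul_zero]

/-- If `λ` is a martingale solution on `[0,T]` for the time-dependent
operator `L_t`, `0 < s < T`, and `ρ` is a bounded `F_s`-measurable probability density
w.r.t. `λ`, then the pushforward of `ρλ` under the restriction to `[s,T]` is a
martingale solution for the same operator on `[s,T]`. -/
theorem stmt17 {d : ℕ} {s T : ℝ} (hs : 0 < s) (hsT : s < T)
    (b : ℝ → Ed d → Ed d) (a : ℝ → Ed d → (Ed d →L[ℝ] Ed d))
    (hb : Measurable fun p : ℝ × Ed d => b p.1 p.2)
    (ha : Measurable fun p : ℝ × Ed d => a p.1 p.2)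
    (lam : Measure (PathI 0 T d))
    (hlam : IsMartSolI 0 T (le_of_lt (lt_trans hs hsT)) b a lam)
    (ρ : PathI 0 T d → ℝ) (hρmeas : Measurable[natFiltI 0 T d s] ρ)
    (hρ0 : ∀ γ, 0 ≤ ρ γ) (hρbdd : ∃ C : ℝ, ∀ γ, ρ γ ≤ C)
    (hρ1 : ∫ γ, ρ γ ∂lam = 1) :
    IsMartSolI s T (le_of_lt hsT) b a
      ((lam.withDensity (fun γ => ENNReal.ofReal (ρ γ))).map
        (restrI (le_of_lt hs))) := by
  obtain ⟨C, hC⟩ := hρbdd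
  have h0T : (0:ℝ) ≤ T := le_of_lt (lt_trans hs hsT)
  have hprob : IsProbabilityMeasure lam := hlam.1
  have hρm : Measurable ρ := hρmeas.mono (natFiltI_le 0 T d s) le_rfl
  have hρint : Integrable ρ lam := by
    refine Integrable.mono' (integrable_const C) hρm.aestronglyMeasurable ?_
    exact ae_of_all _ fun γ => by
      rw [Real.norm_of_nonneg (hρ0 γ)]; exact hC γ
  have hρlint : ∫⁻ γ, ENNReal.ofReal (ρ γ) ∂lam = 1 := by
    rw [← ofReal_integral_eq_lintegral_ofReal hρint (ae_of_all _ hρ0), hρ1,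
      ENNReal.ofReal_one]
  have hwdprob : IsProbabilityMeasure (lam.withDensity (fun γ => ENNReal.ofReal (ρ γ))) := by
    constructor
    rw [withDensity_apply _ MeasurableSet.univ, setLIntegral_univ, hρlint]
  have hrc : Continuous (restrI (d := d) (T := T) (le_of_lt hs)) :=
    ContinuousMap.continuous_precomp _
  have hrm : Measurable (restrI (d := d) (T := T) (le_of_lt hs)) := hrc.measurable
  refine ⟨Measure.isProbabilityMeasure_map hrm.aemeasurable, ?_, ?_⟩
  swap
  · intro ξ φ hξ hφ u t hsu hut htT H hHmeas hH01
    exact mart_aux hs hsT b a hb ha lam hprob hlam.2.2 ρ hρmeas hρ0 C hC hρ1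
      ξ φ hξ hφ u t hsu hut htT H hHmeas hH01
  -- integrability bound
  intro R hR
  set f : PathI s T d → ℝ≥0∞ := fun γ' => ∫⁻ t in Set.Icc s T,
      ENNReal.ofReal ((‖b t (γ' (Set.projIcc s T (le_of_lt hsT) t))‖ +
          ‖a t (γ' (Set.projIcc s T (le_of_lt hsT) t))‖) *
        Set.indicator (Metric.ball (0 : Ed d) R) (fun _ => (1:ℝ))
          (γ' (Set.projIcc s T (le_of_lt hsT) t))) with hfdef
  have hintegrand : ∀ (s' T' : ℝ) (h' : s' ≤ T'), Measurable fun p : PathI s' T' d × ℝ =>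
      ENNReal.ofReal ((‖b p.2 (p.1 (Set.projIcc s' T' h' p.2))‖ +
          ‖a p.2 (p.1 (Set.projIcc s' T' h' p.2))‖) *
        Set.indicator (Metric.ball (0 : Ed d) R) (fun _ => (1:ℝ))
          (p.1 (Set.projIcc s' T' h' p.2))) := by
    intro s' T' h'
    have hev : Measurable fun p : PathI s' T' d × ℝ => p.1 (Set.projIcc s' T' h' p.2) :=
      (continuous_evalProj h').measurable
    have hm : Measurable fun p : PathI s' T' d × ℝ =>
        (p.2, p.1 (Set.projIcc s' T' h' p.2)) := measurable_snd.prodMk hev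
    have hbn : Measurable fun p : PathI s' T' d × ℝ =>
        ‖b p.2 (p.1 (Set.projIcc s' T' h' p.2))‖ := (hb.comp hm).norm
    have han : Measurable fun p : PathI s' T' d × ℝ =>
        ‖a p.2 (p.1 (Set.projIcc s' T' h' p.2))‖ := (ha.comp hm).norm
    have hind : Measurable fun x : Ed d =>
        Set.indicator (Metric.ball (0 : Ed d) R) (fun _ => (1:ℝ)) x :=
      Measurable.indicator measurable_const measurableSet_ball
    exact ENNReal.measurable_ofReal.comp ((hbn.add han).mul (hind.comp hev))
  have hf : Measurable f :=
    Measurable.lintegral_prod_right' (ν := volume.restrict (Set.Icc s T))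
      (hintegrand s T (le_of_lt hsT))
  have hρ'm : Measurable fun γ : PathI 0 T d => ENNReal.ofReal (ρ γ) :=
    ENNReal.measurable_ofReal.comp hρm
  have hfr : Measurable fun γ : PathI 0 T d => f (restrI (le_of_lt hs) γ) := hf.comp hrm
  rw [lintegral_map hf hrm, lintegral_withDensity_eq_lintegral_mul lam hρ'm hfr]
  set F0 : PathI 0 T d → ℝ≥0∞ := fun γ => ∫⁻ t in Set.Icc 0 T,
      ENNReal.ofReal ((‖b t (γ (Set.projIcc 0 T h0T t))‖ +
          ‖a t (γ (Set.projIcc 0 T h0T t))‖) *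
        Set.indicator (Metric.ball (0 : Ed d) R) (fun _ => (1:ℝ))
          (γ (Set.projIcc 0 T h0T t))) with hF0def
  have hbound : ∀ γ, (fun γ => ENNReal.ofReal (ρ γ)) γ * f (restrI (le_of_lt hs) γ)
      ≤ ENNReal.ofReal C * F0 γ := by
    intro γ
    refine mul_le_mul' (ENNReal.ofReal_le_ofReal (hC γ)) ?_
    have heq : f (restrI (le_of_lt hs) γ) = ∫⁻ t in Set.Icc s T,
        ENNReal.ofReal ((‖b t (γ (Set.projIcc 0 T h0T t))‖ +
            ‖a t (γ (Set.projIcc 0 T h0T t))‖) *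
          Set.indicator (Metric.ball (0 : Ed d) R) (fun _ => (1:ℝ))
            (γ (Set.projIcc 0 T h0T t))) := by
      refine setLIntegral_congr_fun measurableSet_Icc (fun t ht => ?_)
      rw [restrI_projIcc hs hsT γ ht.1 ht.2]
    rw [heq]
    exact lintegral_mono_set (Set.Icc_subset_Icc (le_of_lt hs) le_rfl)
  calc ∫⁻ γ, ((fun γ => ENNReal.ofReal (ρ γ)) * fun γ => f (restrI (le_of_lt hs) γ)) γ ∂lam
      ≤ ∫⁻ γ, ENNReal.ofReal C * F0 γ ∂lam := lintegral_mono hbound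
    _ = ENNReal.ofReal C * ∫⁻ γ, F0 γ ∂lam := lintegral_const_mul' _ _ ENNReal.ofReal_ne_top
    _ < ∞ := ENNReal.mul_lt_top ENNReal.ofReal_lt_top (hlam.2.1 R hR)
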